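/- For the operator ∇_q(b)(n) := Σ_{i=0}^{n} q^i ((q^{-n})_i/(q)_i) b(i) acting on sequences b : ℕ → Q(q), and the difference operators Δ_t(b)(n) := b(n) - t·b(n+1), one has ∇_q(b)(n) = (Δ_{q^{-(n-1)}} ∘ ⋯ ∘ Δ_{q^{-1}} ∘ Δ_1 (b))(0) for every n ≥ 0 (the composition of n difference operators with parameters 1, q^{-1}, …, q^{-(n-1)}, applied in that order, evaluated at 0; for n = 0 the empty composition gives b(0)). -/

import Mathlib

/-- The q-shifted factorial `(x)_i = ∏_{j=0}^{i-1} (1 - x q^j)`. -/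
def qpoch {F : Type*} [Field F] (q x : F) (n : ℕ) : F :=
  ∏ j ∈ Finset.range n, (1 - x * q ^ j)

/-- `∇_q(b)(n) = Σ_{i=0}^{n} q^i ((q^{-n})_i/(q)_i) b(i)`. -/
def nablaq {F : Type*} [Field F] (q : F) (b : ℕ → F) (n : ℕ) : F :=
  ∑ i ∈ Finset.range (n + 1), q ^ i * qpoch q ((q ^ n)⁻¹) i / qpoch q q i * b i

/-- The difference operator `Δ_t(b)(n) = b(n) - t b(n+1)`. -/
def Delta {F : Type*} [Field F] (t : F) (b : ℕ → F) : ℕ → F :=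
  fun n => b n - t * b (n + 1)

/-- The iterated composition `Δ_{q^{-(n-1)}} ∘ ⋯ ∘ Δ_{q^{-1}} ∘ Δ_1` applied to `b`
(`Δ_1` first); for `n = 0` it is `b`. -/
def Diter {F : Type*} [Field F] (q : F) (b : ℕ → F) : ℕ → (ℕ → F)
  | 0 => b
  | k + 1 => Delta ((q ^ k)⁻¹) (Diter q b k)

/-!
Both sides satisfy the same recursion in `n`:
`X (n + 1) b = X n b - q⁻ⁿ X n (b ∘ succ)` with `X 0 b = b 0`.
For the iterated differences this is the definition, since the difference operators commute
with the shift. For `∇_q` it is the q-Pascal rule `c_{n+1}(i+1) = c_n(i+1) - q⁻ⁿ c_n(i)` for the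
coefficients `c_n(i) = q^i (q^{-n})_i / (q)_i`, together with `c_n(0) = 1` and `c_n(n+1) = 0`.
-/

section

variable {F : Type*} [Field F]

theorem qpoch_zero (q x : F) : qpoch q x 0 = 1 := Finset.prod_range_zero _

theorem qpoch_succ (q x : F) (i : ℕ) :
    qpoch q x (i + 1) = qpoch q x i * (1 - x * q ^ i) :=
  Finset.prod_range_succ _ _

theorem qpoch_succ' (q x : F) (i : ℕ) :
    qpoch q x (i + 1) = (1 - x) * qpoch q (x * q) i := by
  simp only [qpoch, Finset.prod_range_succ', pow_succ', pow_zero, mul_one, ← mul_assoc]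
  ring

theorem qpoch_eq_zero_iff (q x : F) (i : ℕ) :
    qpoch q x i = 0 ↔ ∃ j < i, x * q ^ j = 1 := by
  rw [qpoch, Finset.prod_eq_zero_iff]
  simp only [Finset.mem_range, sub_eq_zero, eq_comm (a := (1 : F))]

theorem qpoch_self_ne_zero {q : F} (hq1 : ∀ n : ℕ, 1 ≤ n → q ^ n ≠ 1) (i : ℕ) :
    qpoch q q i ≠ 0 := by
  rw [ne_eq, qpoch_eq_zero_iff]
  rintro ⟨j, -, hj⟩
  exact hq1 (j + 1) (Nat.le_add_left 1 j) (by rwa [pow_succ'])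

theorem qpoch_inv_pow_succ_self {q : F} (hq : q ≠ 0) (n : ℕ) :
    qpoch q (q ^ n)⁻¹ (n + 1) = 0 :=
  (qpoch_eq_zero_iff q _ _).2 ⟨n, n.lt_succ_self, inv_mul_cancel₀ (pow_ne_zero n hq)⟩

def nablaCoeff (q : F) (n i : ℕ) : F :=
  q ^ i * qpoch q ((q ^ n)⁻¹) i / qpoch q q i

theorem nablaq_eq_sum (q : F) (b : ℕ → F) (n : ℕ) :
    nablaq q b n = ∑ i ∈ Finset.range (n + 1), nablaCoeff q n i * b i := rfl

theorem nablaCoeff_zero_right (q : F) (n : ℕ) : nablaCoeff q n 0 = 1 := by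
  simp [nablaCoeff, qpoch_zero]

theorem nablaCoeff_succ_self {q : F} (hq : q ≠ 0) (n : ℕ) : nablaCoeff q n (n + 1) = 0 := by
  simp [nablaCoeff, qpoch_inv_pow_succ_self hq]

theorem nablaCoeff_succ_succ {q : F} (hq : q ≠ 0) (hq1 : ∀ n : ℕ, 1 ≤ n → q ^ n ≠ 1)
    (n i : ℕ) :
    nablaCoeff q (n + 1) (i + 1) = nablaCoeff q n (i + 1) - (q ^ n)⁻¹ * nablaCoeff q n i := by
  have hshift : (q ^ (n + 1))⁻¹ * q = (q ^ n)⁻¹ := by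
    rw [pow_succ, mul_inv, inv_mul_cancel_right₀ hq]
  have hi : qpoch q q i ≠ 0 := qpoch_self_ne_zero hq1 i
  have hi1 : 1 - q * q ^ i ≠ 0 := by
    simpa [qpoch_succ, hi] using qpoch_self_ne_zero hq1 (i + 1)
  simp only [nablaCoeff, qpoch_succ' q (q ^ (n + 1))⁻¹, hshift, qpoch_succ]
  field_simp
  ring

theorem nablaq_succ {q : F} (hq : q ≠ 0) (hq1 : ∀ n : ℕ, 1 ≤ n → q ^ n ≠ 1)
    (b : ℕ → F) (n : ℕ) :
    nablaq q b (n + 1) = nablaq q b n - (q ^ n)⁻¹ * nablaq q (fun j => b (j + 1)) n := by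
  have hextend : nablaq q b n
      = ∑ i ∈ Finset.range (n + 1), nablaCoeff q n (i + 1) * b (i + 1) + b 0 := by
    rw [← one_mul (b 0), ← nablaCoeff_zero_right q n,
      ← Finset.sum_range_succ' (fun i => nablaCoeff q n i * b i), Finset.sum_range_succ,
      nablaCoeff_succ_self hq, zero_mul, add_zero, nablaq_eq_sum]
  rw [nablaq_eq_sum, Finset.sum_range_succ', nablaCoeff_zero_right, one_mul, hextend,
    nablaq_eq_sum, Finset.mul_sum, ← sub_add_eq_add_sub, ← Finset.sum_sub_distrib]
  simp only [nablaCoeff_succ_succ hq hq1, sub_mul, mul_assoc]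

theorem Diter_succ_apply (q : F) (b : ℕ → F) (n m : ℕ) :
    Diter q b (n + 1) m = Diter q b n m - (q ^ n)⁻¹ * Diter q b n (m + 1) := rfl

theorem Diter_apply_succ (q : F) (b : ℕ → F) (n m : ℕ) :
    Diter q b n (m + 1) = Diter q (fun j => b (j + 1)) n m := by
  induction n generalizing m with
  | zero => rfl
  | succ k ih => simp only [Diter_succ_apply, ih]

end

theorem stmt_19 {F : Type*} [Field F] (q : F) (hq : q ≠ 0)
    (hq1 : ∀ n : ℕ, 1 ≤ n → q ^ n ≠ 1) (b : ℕ → F) (n : ℕ) :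
    nablaq q b n = Diter q b n 0 := by
  induction n generalizing b with
  | zero => simp [nablaq_eq_sum, nablaCoeff_zero_right, Diter]
  | succ n ih => rw [nablaq_succ hq hq1, ih, ih, Diter_succ_apply, Diter_apply_succ]
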